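/- arXiv:1212.4906 — 4 statements merged into one kernel-verified Lean document; each statement's English description precedes it below -/
import Mathlib

section
/- Let μ: Θ → ℝ be a continuously differentiable function with μ' > 0, let r be a continuous positive density on ℝ with finite first moment, and define for cut-points a_1 < ... < a_n the quantities q_i = ∫_{U_i} r(x) dx and θ̂_i = μ^{-1}((1/q_i) ∫_{U_i} x r(x) dx). Then ∂θ̂_i/∂a_i = (r(a_i)/(q_i μ'(θ̂_i))) (μ(θ̂_i) - a_i), ∂θ̂_i/∂a_{i+1} = (r(a_{i+1})/(q_i μ'(θ̂_i))) (a_{i+1} - μ(θ̂_i)), and ∂θ̂_i/∂a_k = 0 for k ∉ {i, i+1}. -/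
/-!
The mass `q_i` and the first moment `m_i = ∫_{U_i} x r(x) dx` are increments of the cumulative
integrals `R(x) = ∫_{-∞}^x r` and `F(x) = ∫_{-∞}^x t r(t) dt` over `U_i`, so by the fundamental
theorem of calculus only the two endpoints of `U_i` move them, and since `F' = x R'` we get
`∂m_i/∂a_k = a_k ∂q_i/∂a_k`. Hence the centre of mass `m_i / q_i` has derivative
`(∂q_i/∂a_k / q_i) (a_k - m_i / q_i)`, and `θ̂_i = μ⁻¹(m_i / q_i)` picks up the factor
`1 / μ'(θ̂_i)` from the inverse function theorem.
-/

open MeasureTheory Set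

theorem hasDerivAt_setIntegral_Iic {f : ℝ → ℝ} (hf : Continuous f) (hfi : Integrable f) (x : ℝ) :
    HasDerivAt (fun y => ∫ t in Iic y, f t) (f x) x := by
  have hsplit : (fun y => ∫ t in Iic y, f t) =
      fun y => (∫ t in Iic 0, f t) + ∫ t in (0 : ℝ)..y, f t := by
    funext y
    rw [← intervalIntegral.integral_Iic_sub_Iic hfi.integrableOn hfi.integrableOn, add_sub_cancel]
  rw [hsplit]
  exact (intervalIntegral.integral_hasDerivAt_right hfi.intervalIntegrable
    hf.stronglyMeasurable.stronglyMeasurableAtFilter hf.continuousAt).const_add _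

theorem setIntegral_pos_of_forall_pos {f : ℝ → ℝ} (hfi : Integrable f) (hpos : ∀ x, 0 < f x)
    {s : Set ℝ} (hs : volume s ≠ 0) : 0 < ∫ t in s, f t := by
  rw [setIntegral_pos_iff_support_of_nonneg_ae (ae_of_all _ fun t => (hpos t).le)
      hfi.integrableOn,
    Function.support_eq_univ (fun t => (hpos t).ne'), univ_inter]
  exact pos_iff_ne_zero.mpr hs

theorem integral_Iic_pos {f : ℝ → ℝ} (hfi : Integrable f) (hpos : ∀ x, 0 < f x) (x : ℝ) :
    0 < ∫ t in Iic x, f t :=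
  setIntegral_pos_of_forall_pos hfi hpos (by simp [Real.volume_Iic])

theorem integral_Iic_lt_integral {f : ℝ → ℝ} (hfi : Integrable f) (hpos : ∀ x, 0 < f x) (x : ℝ) :
    ∫ t in Iic x, f t < ∫ t, f t := by
  rw [← intervalIntegral.integral_Iic_add_Ioi hfi.integrableOn hfi.integrableOn,
    lt_add_iff_pos_right]
  exact setIntegral_pos_of_forall_pos hfi hpos (by simp [Real.volume_Ioi])

theorem strictMono_integral_Iic {f : ℝ → ℝ} (hfi : Integrable f) (hpos : ∀ x, 0 < f x) :
    StrictMono fun x => ∫ t in Iic x, f t := by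
  intro x y hxy
  rw [← sub_pos, intervalIntegral.integral_Iic_sub_Iic hfi.integrableOn hfi.integrableOn]
  exact intervalIntegral.intervalIntegral_pos_of_pos_on hfi.intervalIntegrable
    (fun t _ => hpos t) hxy

theorem hasDerivAt_of_rightInverse {f f' g : ℝ → ℝ} (hf : ∀ x, HasDerivAt f (f' x) x)
    (hf' : ∀ x, 0 < f' x) (hg : Function.RightInverse g f) (y : ℝ) :
    HasDerivAt g (f' (g y))⁻¹ y := by
  have hmono : StrictMono f := strictMono_of_hasDerivAt_pos hf hf'
  have hcont : Continuous g := (hmono.orderIsoOfRightInverse f g hg).symm.continuous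
  exact (hf (g y)).of_local_left_inverse hcont.continuousAt (hf' _).ne' (.of_forall hg)

theorem HasDerivAt.div_of_deriv_eq_mul {N D : ℝ → ℝ} {c w x : ℝ} (hN : HasDerivAt N (c * w) x)
    (hD : HasDerivAt D w x) (hDx : D x ≠ 0) :
    HasDerivAt (fun t => N t / D t) (w / D x * (c - N x / D x)) x := by
  refine (hN.fun_div hD hDx).congr_deriv ?_
  field_simp

theorem hasDerivAt_update_apply {ι : Type*} [DecidableEq ι] {φ φ' : ℝ → ℝ}
    (hφ : ∀ x, HasDerivAt φ (φ' x) x) (a : ι → ℝ) (j k : ι) :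
    HasDerivAt (fun t => φ (Function.update a k t j)) (if k = j then φ' (a k) else 0) (a k) := by
  by_cases hkj : k = j
  · subst hkj
    simpa using hφ (a k)
  · simpa [Function.update_of_ne (Ne.symm hkj), hkj] using hasDerivAt_const (a k) (φ (a j))

/-- The increment of `φ` over the cell `[b i, b (i + 1))`, where `b 0 = -∞` and `b (n + 1) = ∞`
are encoded by the limits `φ (-∞) = 0` and `φ ∞ = top`. -/
def cellIncrement (φ : ℝ → ℝ) (top : ℝ) (n : ℕ) (b : ℕ → ℝ) (i : ℕ) : ℝ :=
  (if i = n then top else φ (b (i + 1))) - (if i = 0 then 0 else φ (b i))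

theorem cellIncrement_pos {φ : ℝ → ℝ} (hφ : StrictMono φ) (hpos : ∀ x, 0 < φ x) {top : ℝ}
    (htop : ∀ x, φ x < top) {n : ℕ} {b : ℕ → ℝ} (hb : ∀ i j, 1 ≤ i → i < j → j ≤ n → b i < b j)
    {i : ℕ} (hi : i ≤ n) : 0 < cellIncrement φ top n b i := by
  unfold cellIncrement
  split_ifs with hin hi0 hi0
  · linarith [hpos 0, htop 0]
  · linarith [htop (b i)]
  · linarith [hpos (b (i + 1))]
  · linarith [hφ (hb i (i + 1) (by omega) (by omega) (by omega))]

theorem hasDerivAt_cellIncrement_update {φ φ' : ℝ → ℝ} (hφ : ∀ x, HasDerivAt φ (φ' x) x)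
    (top : ℝ) (a : ℕ → ℝ) {n i k : ℕ} (hk1 : 1 ≤ k) (hk2 : k ≤ n) :
    HasDerivAt (fun t => cellIncrement φ top n (Function.update a k t) i)
      (φ' (a k) * ((if k = i + 1 then 1 else 0) - (if k = i then 1 else 0))) (a k) := by
  have hupper : HasDerivAt (fun t => if i = n then top else φ (Function.update a k t (i + 1)))
      (if k = i + 1 then φ' (a k) else 0) (a k) := by
    by_cases hin : i = n
    · simpa [hin, show k ≠ n + 1 by omega] using hasDerivAt_const (a k) top
    · simpa [hin] using hasDerivAt_update_apply hφ a (i + 1) k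
  have hlower : HasDerivAt (fun t => if i = 0 then 0 else φ (Function.update a k t i))
      (if k = i then φ' (a k) else 0) (a k) := by
    by_cases hi0 : i = 0
    · simpa [hi0, show k ≠ 0 by omega] using hasDerivAt_const (a k) (0 : ℝ)
    · simpa [hi0] using hasDerivAt_update_apply hφ a i k
  refine (hupper.sub hlower).congr_deriv ?_
  split_ifs <;> ring

theorem smml_assertion_partial_derivs_general
    (n : ℕ)
    (r : ℝ → ℝ) (hr : Continuous r) (hrpos : ∀ x, 0 < r x)
    (hint : Integrable r) (hnorm : ∫ x, r x = 1)
    (hint1 : Integrable (fun x => x * r x))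
    (μ dμ : ℝ → ℝ) (hμ : ∀ θ, HasDerivAt μ (dμ θ) θ)
    (hdμpos : ∀ θ, 0 < dμ θ)
    (μinv : ℝ → ℝ) (hinvr : ∀ y, μ (μinv y) = y)
    (R : ℝ → ℝ) (hR : ∀ x, R x = ∫ t in Iic x, r t)
    (Q : (ℕ → ℝ) → ℕ → ℝ)
    (hQ : ∀ b i, Q b i = (if i = n then 1 else R (b (i + 1))) - (if i = 0 then 0 else R (b i)))
    (M : (ℕ → ℝ) → ℕ → ℝ)
    (hM : ∀ b i, M b i =
      (if i = n then ∫ t, t * r t else ∫ t in Iic (b (i + 1)), t * r t) -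
      (if i = 0 then 0 else ∫ t in Iic (b i), t * r t))
    (TH : (ℕ → ℝ) → ℕ → ℝ) (hTH : ∀ b i, TH b i = μinv (M b i / Q b i))
    (a : ℕ → ℝ) (ha : ∀ i j, 1 ≤ i → i < j → j ≤ n → a i < a j)
    (i k : ℕ) (hi : i ≤ n) (hk1 : 1 ≤ k) (hk2 : k ≤ n) :
    HasDerivAt (fun t => TH (Function.update a k t) i)
      (if k = i then r (a i) / (Q a i * dμ (TH a i)) * (μ (TH a i) - a i)
       else if k = i + 1 then r (a (i + 1)) / (Q a i * dμ (TH a i)) * (a (i + 1) - μ (TH a i))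
       else 0) (a k) := by
  have hReq : R = fun x => ∫ t in Iic x, r t := funext hR
  have hRd : ∀ x, HasDerivAt R (r x) x := hReq ▸ hasDerivAt_setIntegral_Iic hr hint
  have hFd := hasDerivAt_setIntegral_Iic (f := fun x => x * r x) (by fun_prop) hint1
  have hQcell : ∀ b, Q b i = cellIncrement R 1 n b i := fun b => hQ b i
  have hMcell : ∀ b, M b i = cellIncrement (fun x => ∫ t in Iic x, t * r t) (∫ t, t * r t) n b i :=
    fun b => hM b i
  have hQpos : 0 < Q a i := hQcell a ▸ cellIncrement_pos (hReq ▸ strictMono_integral_Iic hint hrpos)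
    (hReq ▸ integral_Iic_pos hint hrpos) (hnorm ▸ hReq ▸ integral_Iic_lt_integral hint hrpos) ha hi
  set δ : ℝ := (if k = i + 1 then 1 else 0) - (if k = i then 1 else 0) with hδ
  have hQd : HasDerivAt (fun t => Q (Function.update a k t) i) (r (a k) * δ) (a k) := by
    simpa only [hQcell] using hasDerivAt_cellIncrement_update hRd 1 a hk1 hk2
  have hMd : HasDerivAt (fun t => M (Function.update a k t) i) (a k * (r (a k) * δ)) (a k) := by
    simpa only [hMcell, mul_assoc] using hasDerivAt_cellIncrement_update hFd _ a hk1 hk2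
  have hTHd := (hasDerivAt_of_rightInverse hμ hdμpos hinvr _).comp (a k)
    (hMd.div_of_deriv_eq_mul hQd (by rw [Function.update_eq_self]; exact hQpos.ne'))
  simp only [Function.update_eq_self, ← hTH] at hTHd
  have hμTH : μ (TH a i) = M a i / Q a i := by rw [hTH, hinvr]
  refine (hTHd.congr_of_eventuallyEq (.of_forall fun t => hTH _ i)).congr_deriv ?_
  rw [hμTH, hδ]
  rcases eq_or_ne k i with rfl | hki
  · rw [if_pos rfl, if_pos rfl, if_neg (show k ≠ k + 1 by omega)]
    field_simp
    ring
  rcases eq_or_ne k (i + 1) with rfl | hki1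
  · rw [if_neg hki, if_pos rfl, if_pos rfl, if_neg hki]
    field_simp
    ring
  · simp only [if_neg hki, if_neg hki1]
    ring

/-- Partial derivatives of the assertions `θ̂_i(a) = μ⁻¹((1/q_i) ∫_{U_i} x r(x) dx)` with
respect to the cut-points `a_1 < ... < a_n`, where `q_i` is the `r`-mass of
`U_i = [a_i, a_{i+1})` (with `a_0 = -∞`, `a_{n+1} = ∞`) and `μ` is continuously
differentiable with `μ' > 0` and inverse `μinv`. -/
theorem smml_assertion_partial_derivs
    (n : ℕ) (hn : 1 ≤ n)
    (r : ℝ → ℝ) (hr : Continuous r) (hrpos : ∀ x, 0 < r x)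
    (hint : Integrable r) (hnorm : ∫ x, r x = 1)
    (hint1 : Integrable (fun x => x * r x))
    (μ dμ : ℝ → ℝ) (hμ : ∀ θ, HasDerivAt μ (dμ θ) θ) (hdμcont : Continuous dμ)
    (hdμpos : ∀ θ, 0 < dμ θ)
    (μinv : ℝ → ℝ) (hinvl : ∀ θ, μinv (μ θ) = θ) (hinvr : ∀ y, μ (μinv y) = y)
    (R : ℝ → ℝ) (hR : ∀ x, R x = ∫ t in Iic x, r t)
    (Q : (ℕ → ℝ) → ℕ → ℝ)
    (hQ : ∀ b i, Q b i = (if i = n then 1 else R (b (i + 1))) - (if i = 0 then 0 else R (b i)))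
    (M : (ℕ → ℝ) → ℕ → ℝ)
    (hM : ∀ b i, M b i =
      (if i = n then ∫ t, t * r t else ∫ t in Iic (b (i + 1)), t * r t) -
      (if i = 0 then 0 else ∫ t in Iic (b i), t * r t))
    (TH : (ℕ → ℝ) → ℕ → ℝ) (hTH : ∀ b i, TH b i = μinv (M b i / Q b i))
    (a : ℕ → ℝ) (ha : ∀ i j, 1 ≤ i → i < j → j ≤ n → a i < a j)
    (i k : ℕ) (hi : i ≤ n) (hk1 : 1 ≤ k) (hk2 : k ≤ n) :
    HasDerivAt (fun t => TH (Function.update a k t) i)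
      (if k = i then r (a i) / (Q a i * dμ (TH a i)) * (μ (TH a i) - a i)
       else if k = i + 1 then r (a (i + 1)) / (Q a i * dμ (TH a i)) * (a (i + 1) - μ (TH a i))
       else 0) (a k) :=
  smml_assertion_partial_derivs_general n r hr hrpos hint hnorm hint1 μ dμ hμ hdμpos μinv hinvr R hR
    Q hQ M hM TH hTH a ha i k hi hk1 hk2
end

section
/- For a 1-dimensional exponential family f(x|θ) = exp(xθ - ψ(θ)) h(x) with marginal density r and a partition of the data space into intervals U_0, ..., U_n, the expected two-part code length I₁ = -∫ r(x) log(q(x) f(x|θ̂(x))) dx satisfies I₁ = C - Σ_{i=0}^n q_i (log q_i + θ̂_i μ(θ̂_i) - ψ(θ̂_i)), where C = -∫ r(x) log h(x) dx and μ = ψ'. -/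
open MeasureTheory Set

/-- The expected two-part code length `I₁ = -∫ r(x) log(q(x) f(x|θ̂(x))) dx` for the
exponential family `f(x|θ) = exp(xθ - ψ(θ)) h(x)` and the partition of the data space into
intervals `U_0, ..., U_n` equals `C - Σ_i q_i (log q_i + θ̂_i μ(θ̂_i) - ψ(θ̂_i))`, where
`C = -∫ r log h`, `μ = ψ'`, `q_i` is the mass of `U_i` and `μ(θ̂_i)` its centre of mass. -/
theorem smml_I1_finite_sum
    (n : ℕ)
    (r : ℝ → ℝ) (hr : Continuous r) (hrpos : ∀ x, 0 < r x)
    (hint : Integrable r) (hnorm : ∫ x, r x = 1)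
    (hint1 : Integrable (fun x => x * r x))
    (ψ μ : ℝ → ℝ) (hψ : ∀ θ, HasDerivAt ψ (μ θ) θ)
    (h : ℝ → ℝ) (hh : ∀ x, 0 < h x) (hhmeas : Measurable h)
    (hinth : Integrable (fun x => r x * Real.log (h x)))
    (hintr : Integrable (fun x => r x * Real.log (r x)))
    (C : ℝ) (hC : C = -∫ x, r x * Real.log (h x))
    (a : ℕ → ℝ)
    (A : ℕ → EReal) (hA0 : A 0 = ⊥) (hAtop : A (n + 1) = ⊤)
    (hAa : ∀ i, 1 ≤ i → i ≤ n → A i = (a i : EReal))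
    (hAmono : ∀ i j, i < j → j ≤ n + 1 → A i < A j)
    (U : ℕ → Set ℝ)
    (hU : ∀ i, U i = {x : ℝ | A i ≤ (x : EReal) ∧ (x : EReal) < A (i + 1)})
    (q : ℕ → ℝ) (hq : ∀ i, i ≤ n → q i = ∫ x in U i, r x)
    (θhat : ℕ → ℝ)
    (hθhat : ∀ i, i ≤ n → μ (θhat i) * q i = ∫ x in U i, x * r x)
    (qf θf : ℝ → ℝ)
    (hqf : ∀ i, i ≤ n → ∀ x ∈ U i, qf x = q i)
    (hθf : ∀ i, i ≤ n → ∀ x ∈ U i, θf x = θhat i) :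
    (-∫ x, r x * Real.log (qf x * (Real.exp (x * θf x - ψ (θf x)) * h x))) =
      C - ∑ i ∈ Finset.range (n + 1),
        q i * (Real.log (q i) + θhat i * μ (θhat i) - ψ (θhat i)) := by
  -- U i as preimage
  have hUpre : ∀ i, U i = ((↑) : ℝ → EReal) ⁻¹' (Set.Ico (A i) (A (i + 1))) := by
    intro i; rw [hU i]; rfl
  have hUmeas : ∀ i, MeasurableSet (U i) := by
    intro i
    rw [hUpre i]
    exact measurable_coe_real_ereal measurableSet_Ico
  -- monotonicity (non-strict)
  have hmono' : ∀ i j, i ≤ j → j ≤ n + 1 → A i ≤ A j := by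
    intro i j hij hj
    rcases eq_or_lt_of_le hij with rfl | hlt
    · exact le_rfl
    · exact (hAmono i j hlt hj).le
  -- uniqueness of the covering index
  have huniq : ∀ (x : ℝ) i j, i ≤ n → j ≤ n → x ∈ U i → x ∈ U j → i = j := by
    intro x i j hi hj hxi hxj
    by_contra hne
    rcases Nat.lt_or_ge i j with hlt | hge
    · rw [hU i] at hxi; rw [hU j] at hxj
      have h1 : A (i + 1) ≤ A j := hmono' (i + 1) j hlt (hj.trans (Nat.le_succ n))
      exact absurd (hxi.2.trans_le (h1.trans hxj.1)) (lt_irrefl _)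
    · have hlt : j < i := lt_of_le_of_ne hge (Ne.symm (fun e => hne e.symm)).symm
      rw [hU i] at hxi; rw [hU j] at hxj
      have h1 : A (j + 1) ≤ A i := hmono' (j + 1) i hlt (hi.trans (Nat.le_succ n))
      exact absurd (hxj.2.trans_le (h1.trans hxi.1)) (lt_irrefl _)
  -- covering
  have hcover : ∀ x : ℝ, ∃ i, i ≤ n ∧ x ∈ U i := by
    intro x
    have hP : ∃ j, (x : EReal) < A j := ⟨n + 1, by rw [hAtop]; exact EReal.coe_lt_top x⟩
    classical
    have hj0 : Nat.find hP ≠ 0 := by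
      intro h0
      have := Nat.find_spec hP
      rw [h0, hA0] at this
      exact absurd this (by simp)
    obtain ⟨i, hji⟩ := Nat.exists_eq_succ_of_ne_zero hj0
    have hj : (x : EReal) < A (i + 1) := by
      have := Nat.find_spec hP
      rw [hji] at this
      exact this
    have hile : ¬ (x : EReal) < A i := Nat.find_min hP (by omega)
    have hin : i ≤ n := by
      have : Nat.find hP ≤ n + 1 :=
        Nat.find_le (by rw [hAtop]; exact EReal.coe_lt_top x)
      omega
    exact ⟨i, hin, by rw [hU i]; exact ⟨not_lt.1 hile, hj⟩⟩
  -- positivity of q i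
  have hqpos : ∀ i, i ≤ n → 0 < q i := by
    intro i hi
    -- U i contains a nondegenerate closed interval
    have hAlt : A i < A (i + 1) := hAmono i (i + 1) (Nat.lt_succ_self i) (Nat.succ_le_succ hi)
    obtain ⟨b, hb1, hb2⟩ := exists_between hAlt
    obtain ⟨c, hc1, hc2⟩ := exists_between hb2
    have hbbot : b ≠ ⊥ := (hA0 ▸ hmono' 0 i (Nat.zero_le i) (hi.trans (Nat.le_succ n)) : (⊥ : EReal) ≤ A i).trans_lt hb1 |>.ne'
    have hbtop : b ≠ ⊤ := (hb2.trans_le le_top).ne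
    have hcbot : c ≠ ⊥ := (lt_of_le_of_lt bot_le hc1).ne'
    have hctop : c ≠ ⊤ := (hc2.trans_le le_top).ne
    set p := b.toReal
    set s := c.toReal
    have hbp : (p : EReal) = b := EReal.coe_toReal hbtop hbbot
    have hcs : (s : EReal) = c := EReal.coe_toReal hctop hcbot
    have hps : p < s := by
      rw [← EReal.coe_lt_coe_iff]; rw [hbp, hcs]; exact hc1
    have hsub : Set.Icc p s ⊆ U i := by
      intro x hx
      rw [hU i]
      constructor
      · exact (hb1.le.trans (hbp ▸ EReal.coe_le_coe_iff.2 hx.1))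
      · exact lt_of_le_of_lt (hcs ▸ EReal.coe_le_coe_iff.2 hx.2) hc2
    have hvol : 0 < volume (U i) := by
      calc (0 : ENNReal) < volume (Set.Icc p s) := by
            rw [Real.volume_Icc]; simp [hps, sub_pos.2 hps]
        _ ≤ volume (U i) := measure_mono hsub
    rw [hq i hi]
    rw [setIntegral_pos_iff_support_of_nonneg_ae
      (Filter.Eventually.of_forall (fun x => (hrpos x).le)) (hint.integrableOn)]
    have : Function.support r = Set.univ := by
      ext x; simp [Function.support, (hrpos x).ne']
    rw [this, Set.univ_inter]
    exact hvol
  -- integrable pieces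
  have hpiece : ∀ i : ℕ, Integrable (fun x : ℝ =>
      (Real.log (q i) - ψ (θhat i)) * r x + θhat i * (x * r x)) := by
    intro i
    exact (hint.const_mul _).add (hint1.const_mul _)
  -- the decomposed function
  set G : ℝ → ℝ := fun x => r x * Real.log (h x) +
    ∑ i ∈ Finset.range (n + 1), (U i).indicator
      (fun x => (Real.log (q i) - ψ (θhat i)) * r x + θhat i * (x * r x)) x with hG
  have hgG : (fun x => r x * Real.log (qf x * (Real.exp (x * θf x - ψ (θf x)) * h x))) = G := by
    funext x
    obtain ⟨i, hi, hxU⟩ := hcover x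
    have hqfx : qf x = q i := hqf i hi x hxU
    have hθfx : θf x = θhat i := hθf i hi x hxU
    have hlog : Real.log (qf x * (Real.exp (x * θf x - ψ (θf x)) * h x)) =
        Real.log (q i) + (x * θhat i - ψ (θhat i)) + Real.log (h x) := by
      rw [hqfx, hθfx, Real.log_mul (hqpos i hi).ne' (mul_pos (Real.exp_pos _) (hh x)).ne',
        Real.log_mul (Real.exp_pos _).ne' (hh x).ne', Real.log_exp, ← add_assoc]
    have hsum : ∑ j ∈ Finset.range (n + 1), (U j).indicator
        (fun x => (Real.log (q j) - ψ (θhat j)) * r x + θhat j * (x * r x)) x =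
        (Real.log (q i) - ψ (θhat i)) * r x + θhat i * (x * r x) := by
      rw [Finset.sum_eq_single_of_mem i (Finset.mem_range.2 (Nat.lt_succ_of_le hi))]
      · rw [Set.indicator_of_mem hxU]
      · intro j hj hne
        have hjn : j ≤ n := Nat.lt_succ_iff.1 (Finset.mem_range.1 hj)
        apply Set.indicator_of_notMem
        intro hxj
        exact hne (huniq x j i hjn hi hxj hxU)
    rw [hlog, hG]
    simp only [hsum]
    ring
  have hGint : Integrable G := by
    apply hinth.add
    apply integrable_finset_sum
    intro i _
    exact (hpiece i).indicator (hUmeas i)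
  rw [hgG]
  have hIG : ∫ x, G x = (∫ x, r x * Real.log (h x)) +
      ∑ i ∈ Finset.range (n + 1),
        q i * (Real.log (q i) + θhat i * μ (θhat i) - ψ (θhat i)) := by
    rw [hG]
    rw [integral_add hinth (integrable_finset_sum _ (fun i _ => (hpiece i).indicator (hUmeas i)))]
    congr 1
    rw [integral_finset_sum _ (fun i _ => (hpiece i).indicator (hUmeas i))]
    apply Finset.sum_congr rfl
    intro i hi
    have hin : i ≤ n := Nat.lt_succ_iff.1 (Finset.mem_range.1 hi)
    rw [integral_indicator (hUmeas i)]
    rw [integral_add ((hint.integrableOn).const_mul _) ((hint1.integrableOn).const_mul _)]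
    rw [MeasureTheory.integral_const_mul, MeasureTheory.integral_const_mul, ← hq i hin, ← hθhat i hin]
    ring
  rw [hIG, hC]
  ring
end

section
/- With I₁(a) = C - Σ_{i=0}^n q_i (log q_i + θ̂_i μ(θ̂_i) - ψ(θ̂_i)) viewed as a function of the cut-points a = (a_1, ..., a_n), its partial derivatives are ∂I₁/∂a_j = r(a_j) log( (q_j f(a_j|θ̂_j)) / (q_{j-1} f(a_j|θ̂_{j-1})) ) for each j = 1, ..., n. -/
/-!
Only the two cells adjacent to `a_j` move with `a_j`: their masses change at rates `± r(a_j)`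
and their first moments at rates `± a_j r(a_j)`. Writing a cell term as `q log q + q ψ*(m / q)`,
where `ψ*(y) = y θ - ψ θ` with `μ θ = y` is the Legendre transform of `ψ` and `(ψ*)' = μ⁻¹`,
each of the two cells contributes `q' (log q + 1 + a_j θ - ψ θ)`. The two `1`s cancel because the
total mass is fixed, and `a_j θ - ψ θ = log f(a_j | θ) - log h(a_j)`, the `log h` cancelling too.
-/

open MeasureTheory Set Function

section IicIntegral

theorem hasDerivAt_setIntegral_Iic_s3 {E : Type*} [NormedAddCommGroup E] [NormedSpace ℝ E]
    [CompleteSpace E] {g : ℝ → E} (hg : Continuous g) (hgi : Integrable g) (x : ℝ) :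
    HasDerivAt (fun t => ∫ s in Iic t, g s) (g x) x := by
  have hsplit : (fun t => ∫ s in Iic t, g s) = fun t => (∫ s in Iic 0, g s) + ∫ s in 0..t, g s := by
    funext t
    rw [← intervalIntegral.integral_Iic_sub_Iic hgi.integrableOn hgi.integrableOn,
      add_sub_cancel]
  rw [hsplit]
  exact (intervalIntegral.integral_hasDerivAt_right (hg.intervalIntegrable _ _)
    (hg.stronglyMeasurableAtFilter _ _) hg.continuousAt).const_add _

variable {f : ℝ → ℝ} (hfpos : ∀ x, 0 < f x) (hfi : Integrable f)
include hfpos hfi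

theorem setIntegral_pos_of_Ioc_subset {s : Set ℝ} {u v : ℝ} (huv : u < v) (hs : Ioc u v ⊆ s) :
    0 < ∫ x in s, f x := by
  have hpos := intervalIntegral.intervalIntegral_pos_of_pos hfi.intervalIntegrable hfpos huv
  rw [intervalIntegral.integral_of_le huv.le] at hpos
  exact hpos.trans_le (setIntegral_mono_set hfi.integrableOn
    (Filter.Eventually.of_forall fun x => (hfpos x).le) hs.eventuallyLE)

theorem setIntegral_Iic_pos (u : ℝ) : 0 < ∫ x in Iic u, f x :=
  setIntegral_pos_of_Ioc_subset hfpos hfi (sub_one_lt u) Ioc_subset_Iic_self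

theorem setIntegral_Iic_lt_integral (u : ℝ) : ∫ x in Iic u, f x < ∫ x, f x := by
  rw [← intervalIntegral.integral_Iic_add_Ioi hfi.integrableOn hfi.integrableOn,
    lt_add_iff_pos_right]
  exact setIntegral_pos_of_Ioc_subset hfpos hfi (lt_add_one u) Ioc_subset_Ioi_self

theorem strictMono_setIntegral_Iic : StrictMono fun u => ∫ x in Iic u, f x := by
  intro u v huv
  rw [← sub_pos, intervalIntegral.integral_Iic_sub_Iic hfi.integrableOn hfi.integrableOn]
  exact intervalIntegral.intervalIntegral_pos_of_pos hfi.intervalIntegrable hfpos huv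

end IicIntegral

section Cells

/-- The integral of `f` over the `i`-th cell `(b i, b (i + 1)]` cut out of `ℝ` by
`b 1 < ⋯ < b n`, with the conventions `b 0 = -∞` and `b (n + 1) = +∞`. -/
noncomputable def cellIntegral (n : ℕ) (f : ℝ → ℝ) (b : ℕ → ℝ) (i : ℕ) : ℝ :=
  (if i = n then ∫ t, f t else ∫ t in Iic (b (i + 1)), f t) -
    (if i = 0 then 0 else ∫ t in Iic (b i), f t)

variable {n : ℕ} {f : ℝ → ℝ}

theorem cellIntegral_pos (hfpos : ∀ x, 0 < f x) (hfi : Integrable f) {b : ℕ → ℝ}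
    (hb : ∀ i j, 1 ≤ i → i < j → j ≤ n → b i < b j) {i : ℕ} (hi : i ≤ n) :
    0 < cellIntegral n f b i := by
  unfold cellIntegral
  split_ifs with hin hi0 hi0
  · rw [sub_zero]
    exact (setIntegral_Iic_pos hfpos hfi 0).trans (setIntegral_Iic_lt_integral hfpos hfi 0)
  · exact sub_pos.2 (setIntegral_Iic_lt_integral hfpos hfi _)
  · rw [sub_zero]
    exact setIntegral_Iic_pos hfpos hfi _
  · exact sub_pos.2 (strictMono_setIntegral_Iic hfpos hfi (hb i (i + 1) (by omega) (by omega)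
      (by omega)))

theorem cellIntegral_update_of_ne {j i : ℕ} (b : ℕ → ℝ) (t : ℝ) (hi : i ≠ j) (hi' : i + 1 ≠ j) :
    cellIntegral n f (update b j t) i = cellIntegral n f b i := by
  simp only [cellIntegral, update_of_ne hi, update_of_ne hi']

variable (hf : Continuous f) (hfi : Integrable f)
include hf hfi

theorem hasDerivAt_cellIntegral_update_pred {j : ℕ} (hj : 1 ≤ j) (hjn : j ≤ n) (b : ℕ → ℝ)
    (x : ℝ) : HasDerivAt (fun t => cellIntegral n f (update b j t) (j - 1)) (f x) x := by
  have hj' : j - 1 + 1 = j := by omega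
  simp only [cellIntegral, if_neg (by omega : j - 1 ≠ n), hj', update_self,
    update_of_ne (by omega : j - 1 ≠ j)]
  exact (hasDerivAt_setIntegral_Iic_s3 hf hfi x).sub_const _

theorem hasDerivAt_cellIntegral_update_self {j : ℕ} (hj : j ≠ 0) (b : ℕ → ℝ) (x : ℝ) :
    HasDerivAt (fun t => cellIntegral n f (update b j t) j) (-f x) x := by
  simp only [cellIntegral, if_neg hj, update_self, update_of_ne (by omega : j + 1 ≠ j)]
  exact (hasDerivAt_setIntegral_Iic_s3 hf hfi x).const_sub _

end Cells

theorem HasDerivAt.finset_sum_of_two {ι : Type*} {s : Finset ι} {G : ι → ℝ → ℝ} {i₁ i₂ : ι}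
    {d₁ d₂ x : ℝ} (hne : i₁ ≠ i₂) (h₁ : i₁ ∈ s) (h₂ : i₂ ∈ s)
    (hG : ∀ i ∈ s, i ≠ i₁ → i ≠ i₂ → HasDerivAt (G i) 0 x)
    (hd₁ : HasDerivAt (G i₁) d₁ x) (hd₂ : HasDerivAt (G i₂) d₂ x) :
    HasDerivAt (fun t => ∑ i ∈ s, G i t) (d₁ + d₂) x := by
  classical
  let D : ι → ℝ := fun i => if i = i₁ then d₁ else if i = i₂ then d₂ else 0
  have hD : ∀ i ∈ s, HasDerivAt (G i) (D i) x := by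
    intro i hi
    by_cases e₁ : i = i₁
    · subst e₁; simpa [D] using hd₁
    by_cases e₂ : i = i₂
    · subst e₂; simpa [D, hne.symm] using hd₂
    simpa [D, e₁, e₂] using hG i hi e₁ e₂
  have hsum : ∑ i ∈ s, D i = d₁ + d₂ := by
    rw [Finset.sum_eq_add_of_mem i₁ i₂ h₁ h₂ hne fun i _ hi => by simp [D, hi.1, hi.2]]
    simp [D, hne.symm]
  exact hsum ▸ HasDerivAt.fun_sum hD

theorem HasDerivAt.mul_log_add_comp_div {q m Φ : ℝ → ℝ} {q' m' φ' x : ℝ}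
    (hq : HasDerivAt q q' x) (hm : HasDerivAt m m' x) (hΦ : HasDerivAt Φ φ' (m x / q x))
    (hqx : q x ≠ 0) :
    HasDerivAt (fun t => q t * (Real.log (q t) + Φ (m t / q t)))
      (q' * (Real.log (q x) + 1 + Φ (m x / q x)) + φ' * (m' - m x / q x * q')) x := by
  refine (hq.mul ((hq.log hqx).add (hΦ.comp x (hm.div hq hqx)))).congr_deriv ?_
  simp only [Pi.add_apply, comp_apply, Pi.div_apply]
  field_simp
  ring

theorem continuous_of_rightInverse_of_hasDerivAt_pos {μ μinv dμ : ℝ → ℝ}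
    (hμ : ∀ θ, HasDerivAt μ (dμ θ) θ) (hdμ : ∀ θ, 0 < dμ θ) (hinv : RightInverse μinv μ) :
    Continuous μinv :=
  ((strictMono_of_hasDerivAt_pos hμ hdμ).orderIsoOfRightInverse μ μinv hinv).symm.continuous

def legendreTransform (ψ μinv : ℝ → ℝ) (y : ℝ) : ℝ :=
  y * μinv y - ψ (μinv y)

-- Envelope argument: the `θ`-derivative of `y θ - ψ θ` vanishes at `μ θ = y`.
theorem hasDerivAt_legendreTransform {ψ μ μinv : ℝ → ℝ} {μ' y : ℝ}
    (hψ : HasDerivAt ψ (μ (μinv y)) (μinv y)) (hμ : HasDerivAt μ μ' (μinv y)) (hμ' : μ' ≠ 0)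
    (hcont : ContinuousAt μinv y) (hinv : RightInverse μinv μ) :
    HasDerivAt (legendreTransform ψ μinv) (μinv y) y := by
  have hinv' : HasDerivAt μinv μ'⁻¹ y :=
    hμ.of_local_left_inverse hcont hμ' (Filter.Eventually.of_forall hinv)
  refine ((hasDerivAt_id' y).mul hinv').sub (hψ.comp y hinv') |>.congr_deriv ?_
  rw [hinv y]
  field_simp
  ring

theorem hasDerivAt_cell_term {ψ μ dμ μinv : ℝ → ℝ} (hψ : ∀ θ, HasDerivAt ψ (μ θ) θ)
    (hμ : ∀ θ, HasDerivAt μ (dμ θ) θ) (hdμ : ∀ θ, 0 < dμ θ) (hinv : RightInverse μinv μ)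
    {q m : ℝ → ℝ} {q' x : ℝ} (hq : HasDerivAt q q' x) (hm : HasDerivAt m (x * q') x)
    (hqx : q x ≠ 0) :
    HasDerivAt (fun t => q t * (Real.log (q t) + μinv (m t / q t) * μ (μinv (m t / q t)) -
        ψ (μinv (m t / q t))))
      (q' * (Real.log (q x) + 1 + μinv (m x / q x) * x - ψ (μinv (m x / q x)))) x := by
  have hL := hasDerivAt_legendreTransform (hψ _) (hμ _) (hdμ _).ne'
    (continuous_of_rightInverse_of_hasDerivAt_pos hμ hdμ hinv).continuousAt hinv
    (y := m x / q x)
  convert hq.mul_log_add_comp_div hm hL hqx using 1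
  · funext t
    simp only [legendreTransform, hinv _]
    ring
  · simp only [legendreTransform]
    ring

theorem log_mul_exp_mul_div_mul_exp_mul {q₁ q₂ c : ℝ} (s₁ s₂ : ℝ) (hq₁ : 0 < q₁) (hq₂ : 0 < q₂)
    (hc : c ≠ 0) :
    Real.log (q₁ * (Real.exp s₁ * c) / (q₂ * (Real.exp s₂ * c))) =
      Real.log q₁ + s₁ - (Real.log q₂ + s₂) := by
  rw [← mul_assoc, ← mul_assoc, mul_div_mul_right _ _ hc,
    Real.log_div (by positivity) (by positivity), Real.log_mul hq₁.ne' (Real.exp_pos _).ne',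
    Real.log_mul hq₂.ne' (Real.exp_pos _).ne', Real.log_exp, Real.log_exp]

theorem smml_I1_partial_deriv_general
    (n : ℕ)
    (r : ℝ → ℝ) (hr : Continuous r) (hrpos : ∀ x, 0 < r x)
    (hint : Integrable r) (hnorm : ∫ x, r x = 1)
    (hint1 : Integrable (fun x => x * r x))
    (ψ μ dμ : ℝ → ℝ) (hψ : ∀ θ, HasDerivAt ψ (μ θ) θ)
    (hμ : ∀ θ, HasDerivAt μ (dμ θ) θ) (hdμpos : ∀ θ, 0 < dμ θ)
    (μinv : ℝ → ℝ) (hinvr : ∀ y, μ (μinv y) = y)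
    (h : ℝ → ℝ) (hh : ∀ x, 0 < h x)
    (F : ℝ → ℝ → ℝ) (hF : ∀ x θ, F x θ = Real.exp (x * θ - ψ θ) * h x)
    (C : ℝ)
    (R : ℝ → ℝ) (hR : ∀ x, R x = ∫ t in Iic x, r t)
    (Q : (ℕ → ℝ) → ℕ → ℝ)
    (hQ : ∀ b i, Q b i = (if i = n then 1 else R (b (i + 1))) - (if i = 0 then 0 else R (b i)))
    (M : (ℕ → ℝ) → ℕ → ℝ)
    (hM : ∀ b i, M b i =
      (if i = n then ∫ t, t * r t else ∫ t in Iic (b (i + 1)), t * r t) -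
      (if i = 0 then 0 else ∫ t in Iic (b i), t * r t))
    (TH : (ℕ → ℝ) → ℕ → ℝ) (hTH : ∀ b i, TH b i = μinv (M b i / Q b i))
    (I1 : (ℕ → ℝ) → ℝ)
    (hI1 : ∀ b, I1 b = C - ∑ i ∈ Finset.range (n + 1),
      Q b i * (Real.log (Q b i) + TH b i * μ (TH b i) - ψ (TH b i)))
    (a : ℕ → ℝ) (ha : ∀ i j, 1 ≤ i → i < j → j ≤ n → a i < a j)
    (j : ℕ) (hj1 : 1 ≤ j) (hj2 : j ≤ n) :
    HasDerivAt (fun t => I1 (Function.update a j t))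
      (r (a j) * Real.log ((Q a j * F (a j) (TH a j)) /
        (Q a (j - 1) * F (a j) (TH a (j - 1))))) (a j) := by
  have hQr : Q = cellIntegral n r := by
    funext b i
    simp only [hQ, hR, cellIntegral, hnorm]
  have hMr : M = cellIntegral n (fun t => t * r t) := funext fun b => funext (hM b)
  subst hQr hMr
  have hj0 : j ≠ 0 := by omega
  have hxr : Continuous fun t => t * r t := continuous_id.mul hr
  have hpred := cellIntegral_pos hrpos hint ha (i := j - 1) (by omega)
  have hself := cellIntegral_pos hrpos hint ha hj2
  have hterm_pred := hasDerivAt_cell_term hψ hμ hdμpos hinvr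
    (hasDerivAt_cellIntegral_update_pred hr hint hj1 hj2 a (a j))
    (hasDerivAt_cellIntegral_update_pred hxr hint1 hj1 hj2 a (a j))
    (by rw [update_eq_self]; exact hpred.ne')
  have hterm_self := hasDerivAt_cell_term hψ hμ hdμpos hinvr
    (hasDerivAt_cellIntegral_update_self (n := n) hr hint hj0 a (a j))
    ((hasDerivAt_cellIntegral_update_self (n := n) hxr hint1 hj0 a (a j)).congr_deriv
      (mul_neg _ _).symm)
    (by rw [update_eq_self]; exact hself.ne')
  simp only [hI1, hTH]
  refine ((HasDerivAt.finset_sum_of_two (i₁ := j - 1) (i₂ := j) (by omega)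
    (Finset.mem_range.2 (by omega)) (Finset.mem_range.2 (by omega)) ?_ hterm_pred
    hterm_self).const_sub C).congr_deriv ?_
  · intro i _ hi₁ hi₂
    simp only [cellIntegral_update_of_ne _ _ hi₂ (by omega : i + 1 ≠ j)]
    exact hasDerivAt_const _ _
  · simp only [update_eq_self, hF]
    rw [log_mul_exp_mul_div_mul_exp_mul _ _ hself hpred (hh _).ne']
    ring

/-- Lemma 1 (gradient of `I₁`): the partial derivative of the expected two-part code length
`I₁(a) = C - Σ_i q_i(a)(log q_i(a) + θ̂_i(a) μ(θ̂_i(a)) - ψ(θ̂_i(a)))` with respect to the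
cut-point `a_j` equals `r(a_j) log((q_j f(a_j|θ̂_j)) / (q_{j-1} f(a_j|θ̂_{j-1})))`. -/
theorem smml_I1_partial_deriv
    (n : ℕ) (hn : 1 ≤ n)
    (r : ℝ → ℝ) (hr : Continuous r) (hrpos : ∀ x, 0 < r x)
    (hint : Integrable r) (hnorm : ∫ x, r x = 1)
    (hint1 : Integrable (fun x => x * r x))
    (ψ μ dμ : ℝ → ℝ) (hψ : ∀ θ, HasDerivAt ψ (μ θ) θ)
    (hμ : ∀ θ, HasDerivAt μ (dμ θ) θ) (hdμcont : Continuous dμ) (hdμpos : ∀ θ, 0 < dμ θ)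
    (μinv : ℝ → ℝ) (hinvl : ∀ θ, μinv (μ θ) = θ) (hinvr : ∀ y, μ (μinv y) = y)
    (h : ℝ → ℝ) (hh : ∀ x, 0 < h x) (hhcont : Continuous h)
    (hinth : Integrable (fun x => r x * Real.log (h x)))
    (F : ℝ → ℝ → ℝ) (hF : ∀ x θ, F x θ = Real.exp (x * θ - ψ θ) * h x)
    (C : ℝ) (hC : C = -∫ x, r x * Real.log (h x))
    (R : ℝ → ℝ) (hR : ∀ x, R x = ∫ t in Iic x, r t)
    (Q : (ℕ → ℝ) → ℕ → ℝ)
    (hQ : ∀ b i, Q b i = (if i = n then 1 else R (b (i + 1))) - (if i = 0 then 0 else R (b i)))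
    (M : (ℕ → ℝ) → ℕ → ℝ)
    (hM : ∀ b i, M b i =
      (if i = n then ∫ t, t * r t else ∫ t in Iic (b (i + 1)), t * r t) -
      (if i = 0 then 0 else ∫ t in Iic (b i), t * r t))
    (TH : (ℕ → ℝ) → ℕ → ℝ) (hTH : ∀ b i, TH b i = μinv (M b i / Q b i))
    (I1 : (ℕ → ℝ) → ℝ)
    (hI1 : ∀ b, I1 b = C - ∑ i ∈ Finset.range (n + 1),
      Q b i * (Real.log (Q b i) + TH b i * μ (TH b i) - ψ (TH b i)))
    (a : ℕ → ℝ) (ha : ∀ i j, 1 ≤ i → i < j → j ≤ n → a i < a j)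
    (j : ℕ) (hj1 : 1 ≤ j) (hj2 : j ≤ n) :
    HasDerivAt (fun t => I1 (Function.update a j t))
      (r (a j) * Real.log ((Q a j * F (a j) (TH a j)) /
        (Q a (j - 1) * F (a j) (TH a (j - 1))))) (a j) :=
  smml_I1_partial_deriv_general n r hr hrpos hint hnorm hint1 ψ μ dμ hψ hμ hdμpos μinv hinvr h hh F
    hF C R hR Q hQ M hM TH hTH I1 hI1 a ha j hj1 hj2
end

section
/- The Jacobian of G is tridiagonal: ∂G_j/∂a_k = 0 whenever |j - k| > 1, and for j ≠ n, ∂G_j/∂a_{j+1} = (r(a_{j+1})/q_j) (1 + (a_j - μ(θ̂_j))(a_{j+1} - μ(θ̂_j)) / μ'(θ̂_j)). -/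
open MeasureTheory Set

/-!
Only the cell boundaries `a (j - 1)`, `a j`, `a (j + 1)` enter `G_j`, so the far entries vanish.
Moving `a (j + 1)` changes only the mass `q_j` and first moment `m_j` of the cell, at rates
`r (a (j + 1))` and `a (j + 1) * r (a (j + 1))`. As `θ̂_j = μ⁻¹ (m_j / q_j)`, the chain rule gives
`θ̂_j' = r (a (j + 1)) (a (j + 1) - μ θ̂_j) / (q_j μ' θ̂_j)`, and because `ψ' = μ` the term
`a_j θ̂_j - ψ θ̂_j` contributes `(a_j - μ θ̂_j) θ̂_j'`, next to `r (a (j + 1)) / q_j` from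
`log q_j`.
-/

theorem hasDerivAt_integral_Iic {f : ℝ → ℝ} (hf : Continuous f) (hfi : Integrable f) (t₀ : ℝ) :
    HasDerivAt (fun t => ∫ x in Iic t, f x) (f t₀) t₀ := by
  have hsplit : (fun t => ∫ x in Iic t, f x) =
      fun t => (∫ x in Iic t₀, f x) + ∫ x in t₀..t, f x := by
    funext t
    rw [← intervalIntegral.integral_Iic_sub_Iic hfi.integrableOn hfi.integrableOn, add_sub_cancel]
  rw [hsplit]
  exact (intervalIntegral.integral_hasDerivAt_right hfi.intervalIntegrable
    (hf.stronglyMeasurableAtFilter _ _) hf.continuousAt).const_add _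

theorem integral_Iic_sub_Iic_pos {f : ℝ → ℝ} (hfi : Integrable f) (hpos : ∀ x, 0 < f x)
    {a b : ℝ} (hab : a < b) : 0 < (∫ x in Iic b, f x) - ∫ x in Iic a, f x := by
  rw [intervalIntegral.integral_Iic_sub_Iic hfi.integrableOn hfi.integrableOn]
  exact intervalIntegral.intervalIntegral_pos_of_pos hfi.intervalIntegrable hpos hab

theorem hasDerivAt_rightInverse_of_deriv_pos {μ μinv dμ : ℝ → ℝ}
    (hμ : ∀ θ, HasDerivAt μ (dμ θ) θ) (hdμ : ∀ θ, 0 < dμ θ) (hinv : Function.RightInverse μinv μ)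
    (y : ℝ) : HasDerivAt μinv (dμ (μinv y))⁻¹ y := by
  have hmono : StrictMono μ := strictMono_of_deriv_pos fun θ => (hμ θ).deriv ▸ hdμ θ
  have hinv_mono : Monotone μinv := fun y₁ y₂ hy =>
    hmono.le_iff_le.mp (by rwa [hinv y₁, hinv y₂])
  have hinv_surj : Function.Surjective μinv := fun θ => ⟨μ θ, hmono.injective (hinv (μ θ))⟩
  exact .of_local_left_inverse (hinv_mono.continuous_of_surjective hinv_surj).continuousAt
    (hμ _) (hdμ _).ne' (.of_forall hinv)

theorem hasDerivAt_rightInverse_comp_div {μ μinv dμ : ℝ → ℝ}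
    (hμ : ∀ θ, HasDerivAt μ (dμ θ) θ) (hdμ : ∀ θ, 0 < dμ θ) (hinv : Function.RightInverse μinv μ)
    {q m : ℝ → ℝ} {ρ t₀ : ℝ} (hq : HasDerivAt q ρ t₀) (hm : HasDerivAt m (t₀ * ρ) t₀)
    (hq0 : q t₀ ≠ 0) :
    HasDerivAt (fun t => μinv (m t / q t))
      (ρ * (t₀ - μ (μinv (m t₀ / q t₀))) / (q t₀ * dμ (μinv (m t₀ / q t₀)))) t₀ := by
  have hdμ0 := (hdμ (μinv (m t₀ / q t₀))).ne'
  refine ((hasDerivAt_rightInverse_of_deriv_pos hμ hdμ hinv _).comp t₀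
    (hm.div hq hq0)).congr_deriv ?_
  rw [Pi.div_apply, hinv]
  field_simp

theorem hasDerivAt_log_add_mul_sub_comp_rightInverse {ψ μ μinv dμ : ℝ → ℝ}
    (hψ : ∀ θ, HasDerivAt ψ (μ θ) θ) (hμ : ∀ θ, HasDerivAt μ (dμ θ) θ) (hdμ : ∀ θ, 0 < dμ θ)
    (hinv : Function.RightInverse μinv μ) (c : ℝ)
    {q m : ℝ → ℝ} {ρ t₀ : ℝ} (hq : HasDerivAt q ρ t₀) (hm : HasDerivAt m (t₀ * ρ) t₀)
    (hq0 : q t₀ ≠ 0) :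
    HasDerivAt (fun t => Real.log (q t) + c * μinv (m t / q t) - ψ (μinv (m t / q t)))
      (ρ / q t₀ * (1 + (c - μ (μinv (m t₀ / q t₀))) * (t₀ - μ (μinv (m t₀ / q t₀))) /
        dμ (μinv (m t₀ / q t₀)))) t₀ := by
  have hθ := hasDerivAt_rightInverse_comp_div hμ hdμ hinv hq hm hq0
  have hdμ0 := (hdμ (μinv (m t₀ / q t₀))).ne'
  refine (((hq.log hq0).add (hθ.const_mul c)).sub ((hψ _).comp t₀ hθ)).congr_deriv ?_
  field_simp
  ring

theorem smml_G_jacobian_tridiagonal_general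
    (n : ℕ)
    (r : ℝ → ℝ) (hr : Continuous r) (hrpos : ∀ x, 0 < r x)
    (hint : Integrable r)
    (hint1 : Integrable (fun x => x * r x))
    (ψ μ dμ : ℝ → ℝ) (hψ : ∀ θ, HasDerivAt ψ (μ θ) θ)
    (hμ : ∀ θ, HasDerivAt μ (dμ θ) θ) (hdμpos : ∀ θ, 0 < dμ θ)
    (μinv : ℝ → ℝ) (hinvr : ∀ y, μ (μinv y) = y)
    (R : ℝ → ℝ) (hR : ∀ x, R x = ∫ t in Iic x, r t)
    (Q : (ℕ → ℝ) → ℕ → ℝ)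
    (hQ : ∀ b i, Q b i = (if i = n then 1 else R (b (i + 1))) - (if i = 0 then 0 else R (b i)))
    (M : (ℕ → ℝ) → ℕ → ℝ)
    (hM : ∀ b i, M b i =
      (if i = n then ∫ t, t * r t else ∫ t in Iic (b (i + 1)), t * r t) -
      (if i = 0 then 0 else ∫ t in Iic (b i), t * r t))
    (TH : (ℕ → ℝ) → ℕ → ℝ) (hTH : ∀ b i, TH b i = μinv (M b i / Q b i))
    (a : ℕ → ℝ) (ha : ∀ i j, 1 ≤ i → i < j → j ≤ n → a i < a j)
    (G : (ℕ → ℝ) → ℕ → ℝ)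
    (hG : ∀ b j, G b j =
      (Real.log (Q b j) + b j * TH b j - ψ (TH b j)) -
      (Real.log (Q b (j - 1)) + b j * TH b (j - 1) - ψ (TH b (j - 1))))
    (j : ℕ) (hj1 : 1 ≤ j) :
    (∀ k, 1 ≤ k → k ≤ n → (k + 1 < j ∨ j + 1 < k) →
      HasDerivAt (fun t => G (Function.update a k t) j) 0 (a k)) ∧
    (j < n →
      HasDerivAt (fun t => G (Function.update a (j + 1) t) j)
        (r (a (j + 1)) / Q a j *
          (1 + (a j - μ (TH a j)) * (a (j + 1) - μ (TH a j)) / dμ (TH a j)))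
        (a (j + 1))) := by
  have hj0 : j ≠ 0 := by omega
  refine ⟨fun k _ _ hkj => ?_, fun hjn => ?_⟩
  · suffices hconst : ∀ t, G (Function.update a k t) j = G a j by
      simpa only [hconst] using hasDerivAt_const (a k) (G a j)
    intro t
    simp only [hG, hTH, hM, hQ, Function.update_of_ne (show j + 1 ≠ k by omega),
      Function.update_of_ne (show j ≠ k by omega), Function.update_of_ne (show j - 1 ≠ k by omega),
      Function.update_of_ne (show j - 1 + 1 ≠ k by omega)]
  · set q : ℝ → ℝ := fun t => (∫ x in Iic t, r x) - ∫ x in Iic (a j), r x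
    set m : ℝ → ℝ := fun t => (∫ x in Iic t, x * r x) - ∫ x in Iic (a j), x * r x
    have hupdate : ∀ t, G (Function.update a (j + 1) t) j =
        (Real.log (q t) + a j * μinv (m t / q t) - ψ (μinv (m t / q t))) -
          (Real.log (Q a (j - 1)) + a j * TH a (j - 1) - ψ (TH a (j - 1))) := by
      intro t
      simp only [hG, hTH, hM, hQ, hR, q, m, if_neg hjn.ne, if_neg hj0, Function.update_self,
        Function.update_of_ne (show j ≠ j + 1 by omega),
        Function.update_of_ne (show j - 1 ≠ j + 1 by omega),
        Function.update_of_ne (show j - 1 + 1 ≠ j + 1 by omega)]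
    have hQa : Q a j = q (a (j + 1)) := by simp only [hQ, hR, q, if_neg hjn.ne, if_neg hj0]
    have hTHa : TH a j = μinv (m (a (j + 1)) / q (a (j + 1))) := by
      simp only [hTH, hM, hQa, m, if_neg hjn.ne, if_neg hj0]
    have hq_pos : 0 < q (a (j + 1)) :=
      integral_Iic_sub_Iic_pos hint hrpos (ha j (j + 1) hj1 (by omega) hjn)
    have hq_deriv : HasDerivAt q (r (a (j + 1))) (a (j + 1)) :=
      (hasDerivAt_integral_Iic hr hint _).sub_const _
    have hm_deriv : HasDerivAt m (a (j + 1) * r (a (j + 1))) (a (j + 1)) :=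
      (hasDerivAt_integral_Iic (by fun_prop) hint1 _).sub_const _
    simp only [hupdate, hQa, hTHa]
    exact (hasDerivAt_log_add_mul_sub_comp_rightInverse hψ hμ hdμpos hinvr (a j) hq_deriv hm_deriv
      hq_pos.ne').sub_const _

/-- Lemma 2, off-diagonal entries: the Jacobian of `G` is tridiagonal, i.e.
`∂G_j/∂a_k = 0` for `|j - k| > 1`, and for `j ≠ n`,
`∂G_j/∂a_{j+1} = (r(a_{j+1})/q_j)(1 + (a_j - μ(θ̂_j))(a_{j+1} - μ(θ̂_j))/μ'(θ̂_j))`. -/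
theorem smml_G_jacobian_tridiagonal
    (n : ℕ) (hn : 1 ≤ n)
    (r : ℝ → ℝ) (hr : Continuous r) (hrpos : ∀ x, 0 < r x)
    (hint : Integrable r) (hnorm : ∫ x, r x = 1)
    (hint1 : Integrable (fun x => x * r x))
    (ψ μ dμ : ℝ → ℝ) (hψ : ∀ θ, HasDerivAt ψ (μ θ) θ)
    (hμ : ∀ θ, HasDerivAt μ (dμ θ) θ) (hdμcont : Continuous dμ) (hdμpos : ∀ θ, 0 < dμ θ)
    (μinv : ℝ → ℝ) (hinvl : ∀ θ, μinv (μ θ) = θ) (hinvr : ∀ y, μ (μinv y) = y)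
    (h : ℝ → ℝ) (hh : ∀ x, 0 < h x) (hhcont : Continuous h)
    (hinth : Integrable (fun x => r x * Real.log (h x)))
    (F : ℝ → ℝ → ℝ) (hF : ∀ x θ, F x θ = Real.exp (x * θ - ψ θ) * h x)
    (C : ℝ) (hC : C = -∫ x, r x * Real.log (h x))
    (R : ℝ → ℝ) (hR : ∀ x, R x = ∫ t in Iic x, r t)
    (Q : (ℕ → ℝ) → ℕ → ℝ)
    (hQ : ∀ b i, Q b i = (if i = n then 1 else R (b (i + 1))) - (if i = 0 then 0 else R (b i)))
    (M : (ℕ → ℝ) → ℕ → ℝ)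
    (hM : ∀ b i, M b i =
      (if i = n then ∫ t, t * r t else ∫ t in Iic (b (i + 1)), t * r t) -
      (if i = 0 then 0 else ∫ t in Iic (b i), t * r t))
    (TH : (ℕ → ℝ) → ℕ → ℝ) (hTH : ∀ b i, TH b i = μinv (M b i / Q b i))
    (I1 : (ℕ → ℝ) → ℝ)
    (hI1 : ∀ b, I1 b = C - ∑ i ∈ Finset.range (n + 1),
      Q b i * (Real.log (Q b i) + TH b i * μ (TH b i) - ψ (TH b i)))
    (a : ℕ → ℝ) (ha : ∀ i j, 1 ≤ i → i < j → j ≤ n → a i < a j)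
    (G : (ℕ → ℝ) → ℕ → ℝ)
    (hG : ∀ b j, G b j =
      (Real.log (Q b j) + b j * TH b j - ψ (TH b j)) -
      (Real.log (Q b (j - 1)) + b j * TH b (j - 1) - ψ (TH b (j - 1))))
    (j : ℕ) (hj1 : 1 ≤ j) (hj2 : j ≤ n) :
    (∀ k, 1 ≤ k → k ≤ n → (k + 1 < j ∨ j + 1 < k) →
      HasDerivAt (fun t => G (Function.update a k t) j) 0 (a k)) ∧
    (j < n →
      HasDerivAt (fun t => G (Function.update a (j + 1) t) j)
        (r (a (j + 1)) / Q a j *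
          (1 + (a j - μ (TH a j)) * (a (j + 1) - μ (TH a j)) / dμ (TH a j)))
        (a (j + 1))) :=
  smml_G_jacobian_tridiagonal_general n r hr hrpos hint hint1 ψ μ dμ hψ hμ hdμpos μinv hinvr R hR Q
    hQ M hM TH hTH a ha G hG j hj1
end
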